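/- arXiv:1501.00352 — 2 statements merged into one kernel-verified Lean document; each statement's English description precedes it below -/
import Mathlib

section
/- Let S^{n−1}_∞ be a great (n−1)-sphere in S^n and suppose Γ ≤ SL±(n+1,ℝ) acts cocompactly on a properly convex open domain Ω ⊂ S^{n−1}_∞. Let v ∈ S^{n*} be the point dual to S^{n−1}_∞, with antipode v−. Then the dual group Γ* acts on a properly convex tube B ⊂ S^{n*} with vertices v and v−, and the space R_v(B) of directions at v of the open great segments constituting the interior of B is projectively diffeomorphic, together with the Γ*-action, to the dual domain of Ω; that is, Ω and R_v(B) form a pair of dual domains. -/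
/-!
Common definitions for formalizing "A classification of ends of properly convex
real projective orbifolds II" (Choi).

We model the projective sphere `S^n` as the unit sphere of `ℝ^{n+1}`
(the quotient of `ℝ^{n+1} ∖ {0}` by positive scalars), on which matrices of
`GL(n+1,ℝ)` act projectively after radial normalization.  Convexity of subsets
of `S^n` is expressed through convexity of the corresponding radial cones, and
the Hilbert metric is expressed through the standard cone-gauge formula.
Smoothness of strictly convex boundary hypersurfaces is modeled by uniqueness
of supporting hyperplanes (`C¹`) together with strict convexity, and
"open cell" by homeomorphism with a Euclidean space.
-/

open Matrix Set

noncomputable section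

namespace CEnds

/-- `ℝ^{n+1}` with its Euclidean structure. -/
abbrev Vn (n : ℕ) := EuclideanSpace ℝ (Fin (n + 1))

/-- `(n+1) × (n+1)` real matrices. -/
abbrev Mat (n : ℕ) := Matrix (Fin (n + 1)) (Fin (n + 1)) ℝ

/-- the general linear group `GL(n+1, ℝ)`. -/
abbrev GLn (n : ℕ) := Matrix.GeneralLinearGroup (Fin (n + 1)) ℝ

variable {n : ℕ}

/-- the unit-sphere model of the projective sphere `S^n`. -/
def Sph (n : ℕ) : Set (Vn n) := {v : Vn n | ‖v‖ = 1}

/-- the subset `SL±(n+1,ℝ)` of `GL(n+1,ℝ)`: determinant `±1`. -/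
def SLpm (n : ℕ) : Set (GLn n) := {g : GLn n | |((g : Mat n)).det| = 1}

/-- the linear action of a matrix on `ℝ^{n+1}`. -/
def mvec (g : Mat n) (v : Vn n) : Vn n :=
  (EuclideanSpace.equiv (Fin (n + 1)) ℝ).symm (g.mulVec ((EuclideanSpace.equiv (Fin (n + 1)) ℝ) v))

/-- radial normalization to the unit sphere. -/
def nrm (v : Vn n) : Vn n := ‖v‖⁻¹ • v

/-- the projective action of a matrix on the sphere `S^n`. -/
def pact (g : Mat n) (v : Vn n) : Vn n := nrm (mvec g v)

/-- the radial cone (without `0`) over a subset of the sphere. -/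
def rayCone (A : Set (Vn n)) : Set (Vn n) := {w | ∃ v ∈ A, ∃ c : ℝ, 0 < c ∧ w = c • v}

/-- a convex subset of `S^n`: contained in an affine chart and convex there. -/
def IsConvexSub (A : Set (Vn n)) : Prop :=
  A ⊆ Sph n ∧ Convex ℝ (insert (0 : Vn n) (rayCone A)) ∧
    ∃ f : Vn n →ₗ[ℝ] ℝ, ∀ v ∈ A, 0 < f v

/-- a properly convex subset of `S^n`: its closure is compact in an affine chart. -/
def IsPCSub (A : Set (Vn n)) : Prop :=
  A ⊆ Sph n ∧ Convex ℝ (insert (0 : Vn n) (rayCone A)) ∧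
    ∃ f : Vn n →ₗ[ℝ] ℝ, ∀ v ∈ closure A, 0 < f v

/-- relative openness in the sphere `S^n`. -/
def IsOpenInS (A : Set (Vn n)) : Prop := ∃ U : Set (Vn n), IsOpen U ∧ A = U ∩ Sph n

/-- a properly convex domain in `S^n`. -/
def IsPCDom (A : Set (Vn n)) : Prop := IsPCSub A ∧ IsOpenInS A ∧ A.Nonempty

/-- a convex domain in `S^n`. -/
def IsConvexDom (A : Set (Vn n)) : Prop := IsConvexSub A ∧ IsOpenInS A ∧ A.Nonempty

/-- the topological boundary `Bd A` of `A` inside `S^n`. -/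
def BdS (A : Set (Vn n)) : Set (Vn n) := closure A ∩ closure (Sph n \ A)

/-- the interior of `A` inside `S^n`. -/
def IntS (A : Set (Vn n)) : Set (Vn n) :=
  {x | x ∈ A ∧ ∃ ε : ℝ, 0 < ε ∧ ∀ y ∈ Sph n, ‖y - x‖ < ε → y ∈ A}

/-- the closed projective segment between `p` and `q`. -/
def sphSeg (p q : Vn n) : Set (Vn n) :=
  {x | ∃ a b : ℝ, 0 ≤ a ∧ 0 ≤ b ∧ 0 < a + b ∧ x = nrm (a • p + b • q)}

/-- the open projective segment between `p` and `q`. -/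
def sphSegOpen (p q : Vn n) : Set (Vn n) :=
  {x | ∃ a b : ℝ, 0 < a ∧ 0 < b ∧ x = nrm (a • p + b • q)}

/-- the join `{v} * A` of a point and a set. -/
def joinPt (v : Vn n) (A : Set (Vn n)) : Set (Vn n) :=
  {x | ∃ a b : ℝ, ∃ p ∈ A, 0 ≤ a ∧ 0 ≤ b ∧ 0 < a + b ∧ x = nrm (a • v + b • p)}

/-- the strict join `A * B` of two sets. -/
def strictJoin2 (A B : Set (Vn n)) : Set (Vn n) :=
  {x | ∃ a b : ℝ, ∃ p ∈ A, ∃ q ∈ B, 0 ≤ a ∧ 0 ≤ b ∧ 0 < a + b ∧ x = nrm (a • p + b • q)}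

/-- the strict join `K 0 * ⋯ * K (k-1)` of a finite family of sets. -/
def strictJoinF {k : ℕ} (K : Fin k → Set (Vn n)) : Set (Vn n) :=
  {x | ∃ c : Fin k → ℝ, ∃ p : Fin k → Vn n, (∀ i, 0 ≤ c i) ∧ (∀ i, p i ∈ K i) ∧
    (∃ i, 0 < c i) ∧ x = nrm (∑ i, c i • p i)}

/-- `closure Om` is a (nontrivial) strict join. -/
def IsStrictJoinSet (C : Set (Vn n)) : Prop :=
  ∃ (V₁ V₂ : Submodule ℝ (Vn n)) (A B : Set (Vn n)),
    V₁ ⊓ V₂ = ⊥ ∧ A.Nonempty ∧ B.Nonempty ∧ A ⊆ ↑V₁ ∧ B ⊆ ↑V₂ ∧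
    A ⊆ Sph n ∧ B ⊆ Sph n ∧ C = strictJoin2 A B

/-- the sphere `S^{n-1}_v` of directions at `v`. -/
def linkSph (v : Vn n) : Set (Vn n) := {u : Vn n | ‖u‖ = 1 ∧ (inner ℝ u v : ℝ) = 0}

/-- relative openness in the link sphere at `v`. -/
def IsOpenInLink (v : Vn n) (A : Set (Vn n)) : Prop :=
  ∃ U : Set (Vn n), IsOpen U ∧ A = U ∩ linkSph v

/-- the component of `x` orthogonal to the unit vector `v`. -/
def perp (v x : Vn n) : Vn n := x - (inner ℝ x v : ℝ) • v

/-- the linear map induced by `g` on `ℝ^{n+1}/⟨v⟩ ≅ v^⊥` (for `g` fixing the ray of `v`). -/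
def linkMap (g : Mat n) (v x : Vn n) : Vn n := perp v (mvec g x)

/-- the projective action induced by `g` on the link sphere of `v`. -/
def linkAct (g : Mat n) (v u : Vn n) : Vn n := nrm (linkMap g v u)

/-- the boundary of a subset of the link sphere of `v`, inside the link sphere. -/
def BdLink (v : Vn n) (A : Set (Vn n)) : Set (Vn n) := closure A ∩ closure (linkSph v \ A)

/-- the boundary of `A` inside the unit sphere of the linear span of `A`. -/
def relBd (A : Set (Vn n)) : Set (Vn n) :=
  closure A ∩ closure ((Sph n ∩ ((Submodule.span ℝ A : Submodule ℝ (Vn n)) : Set (Vn n))) \ A)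

/-- the relative interior of `A` (interior within the sphere of its span). -/
def relInt (A : Set (Vn n)) : Set (Vn n) := A \ relBd A

/-- the open tube over `Sg ⊆ S^{n-1}_v`: the union of open great segments from `v` to `-v`
in the directions of `Sg`. -/
def tubeCore (v : Vn n) (Sg : Set (Vn n)) : Set (Vn n) :=
  {x | ∃ u ∈ Sg, ∃ t : ℝ, 0 < t ∧ t < Real.pi ∧ x = Real.cos t • v + Real.sin t • u}

/-- the tube `T_v(Sg)`: the closure of the above. -/
def tube (v : Vn n) (Sg : Set (Vn n)) : Set (Vn n) := closure (tubeCore v Sg)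

/-- the open great half-circle from `v` through (the direction of) `x`. -/
def greatRay (v x : Vn n) : Set (Vn n) :=
  {z | ‖z‖ = 1 ∧ ∃ a b : ℝ, 0 < b ∧ z = a • v + b • perp v x}

/-- `R_v(Om)`: the set of directions at `v` of open segments from `v` contained in `Om`. -/
def dirSet (Om : Set (Vn n)) (v : Vn n) : Set (Vn n) :=
  {u | u ∈ linkSph v ∧ ∃ t : ℝ, 0 < t ∧ t < Real.pi ∧
    ∀ s : ℝ, 0 < s → s < t → Real.cos s • v + Real.sin s • u ∈ Om}

/- ### eigenvalue data -/

/-- complexification of a real matrix. -/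
def cplx (g : Mat n) : Matrix (Fin (n + 1)) (Fin (n + 1)) ℂ := g.map (fun x => (x : ℂ))

/-- the set of complex eigenvalues of `g`. -/
def eigSet (g : Mat n) : Set ℂ := (cplx g).charpoly.rootSet ℂ

/-- the largest modulus of the eigenvalues of `g`. -/
def eigMax (g : Mat n) : ℝ := sSup ((fun μ : ℂ => ‖μ‖) '' eigSet g)

/-- the smallest modulus of the eigenvalues of `g`. -/
def eigMin (g : Mat n) : ℝ := sInf ((fun μ : ℂ => ‖μ‖) '' eigSet g)

/-- the scalar by which `g` acts along the ray of `v` (a junk value if `v` is not an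
eigenvector). -/
def eigAt (g : Mat n) (v : Vn n) : ℝ := sSup {c : ℝ | mvec g v = c • v}

/-- `g` fixes the ray over `v`, with a positive eigenvalue. -/
def FixesRay (g : Mat n) (v : Vn n) : Prop := ∃ c : ℝ, 0 < c ∧ mvec g v = c • v

/-- `a` is the attracting fixed point of `g` on `S^n`: the largest eigenvalue-modulus is
attained by a (unique) positive eigenvalue whose eigenspace is the line over `a`. -/
def IsAttractingFP (g : Mat n) (a : Vn n) : Prop :=
  a ∈ Sph n ∧ mvec g a = eigMax g • a ∧
  (∀ b ∈ Sph n, mvec g b = eigMax g • b → b = a ∨ b = -a) ∧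
  (∀ μ ∈ eigSet g, ‖μ‖ = eigMax g → μ = (eigMax g : ℂ))

/-- membership of a complex vector in the complexification of a real subspace. -/
def inCplxSpan (W : Submodule ℝ (Vn n)) (x : Fin (n + 1) → ℂ) : Prop :=
  ((EuclideanSpace.equiv (Fin (n + 1)) ℝ).symm (fun k => (x k).re) ∈ W) ∧
  ((EuclideanSpace.equiv (Fin (n + 1)) ℝ).symm (fun k => (x k).im) ∈ W)

/-- `μ` is an eigenvalue of the restriction of `g` to the invariant subspace `W`. -/
def hasEigOn (g : Mat n) (W : Submodule ℝ (Vn n)) (μ : ℂ) : Prop :=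
  ∃ x : Fin (n + 1) → ℂ, x ≠ 0 ∧ inCplxSpan W x ∧ (cplx g).mulVec x = μ • x

/- ### the Hilbert metric, via the cone gauge -/

/-- the cone gauge `M(x/y) = inf { t > 0 | t•y - x ∈ clo C }`. -/
def cgauge (C : Set (Vn n)) (x y : Vn n) : ℝ :=
  sInf {t : ℝ | 0 < t ∧ t • y - x ∈ closure C}

/-- the Hilbert (cross-ratio) distance on the projectivization of the cone `C`,
`d([x],[y]) = log (M(x/y) M(y/x))`. -/
def hDist (C : Set (Vn n)) (x y : Vn n) : ℝ := Real.log (cgauge C x y * cgauge C y x)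

/-- translation length `leng` of the linear action of `g` on the projectivized cone `C`. -/
def lengLin (C : Set (Vn n)) (g : Mat n) : ℝ :=
  sInf {r : ℝ | ∃ x ∈ C, r = hDist C x (mvec g x)}

/-- translation length of the induced action of `g` on the link of `v`, on the cone `C ⊆ v^⊥`. -/
def lengLink (v : Vn n) (C : Set (Vn n)) (g : Mat n) : ℝ :=
  sInf {r : ℝ | ∃ x ∈ C, r = hDist C x (linkMap g v x)}

/- ### group actions -/

/-- the projective action of a group element on the sphere. -/
def sphAct (g : GLn n) : Vn n → Vn n := pact ((g : Mat n))

/-- the induced action of a group element on the link sphere of `v`. -/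
def lnkAct (v : Vn n) (g : GLn n) : Vn n → Vn n := fun u => linkAct ((g : Mat n)) v u

/-- a properly discontinuous action (with respect to an abstract action `act`). -/
def ProperlyDiscA (act : GLn n → Vn n → Vn n) (Γ : Subgroup (GLn n)) (Om : Set (Vn n)) : Prop :=
  ∀ K : Set (Vn n), K ⊆ Om → IsCompact K →
    {g : GLn n | g ∈ Γ ∧ (act g '' K ∩ K).Nonempty}.Finite

/-- a cocompact action (with respect to an abstract action `act`). -/
def CocompactA (act : GLn n → Vn n → Vn n) (Γ : Subgroup (GLn n)) (Om : Set (Vn n)) : Prop :=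
  ∃ K : Set (Vn n), K ⊆ Om ∧ IsCompact K ∧ ∀ x ∈ Om, ∃ g ∈ Γ, act g x ∈ K

/-- discreteness of a subgroup of `GL(n+1,ℝ)`. -/
def IsDiscreteSubgroup (Γ : Subgroup (GLn n)) : Prop :=
  ∀ K : Set (Mat n), IsCompact K → {g : GLn n | g ∈ Γ ∧ ((g : Mat n)) ∈ K}.Finite

/-- the uniform middle-eigenvalue condition with respect to the fixed point `v`. -/
def UMECat (Γ : Subgroup (GLn n)) (v : Vn n) (Sg : Set (Vn n)) : Prop :=
  ∃ C : ℝ, 1 < C ∧ ∀ g ∈ Γ,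
    C⁻¹ * lengLink v (rayCone Sg) ((g : Mat n)) ≤
        Real.log (eigMax ((g : Mat n)) / eigAt ((g : Mat n)) v) ∧
    Real.log (eigMax ((g : Mat n)) / eigAt ((g : Mat n)) v) ≤
        C * lengLink v (rayCone Sg) ((g : Mat n))

/-- the uniform middle-eigenvalue condition with respect to the invariant hyperplane
`P = w^⊥` (the relevant eigenvalue is the one of `g` on `ℝ^{n+1}/P`, i.e. of `gᵀ` at `w`). -/
def UMECperp (Γ : Subgroup (GLn n)) (w : Vn n) (Sg : Set (Vn n)) : Prop :=
  ∃ C : ℝ, 1 < C ∧ ∀ g ∈ Γ,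
    C⁻¹ * lengLin (rayCone Sg) ((g : Mat n)) ≤
        Real.log (eigMax ((g : Mat n)) / eigAt (((g : Mat n))ᵀ) w) ∧
    Real.log (eigMax ((g : Mat n)) / eigAt (((g : Mat n))ᵀ) w) ≤
        C * lengLin (rayCone Sg) ((g : Mat n))

/-- admissibility of the action of `Γ` on the properly convex domain `Sg`
(with respect to an abstract action `act`): `clo Sg` is a strict join
`K 0 * ⋯ * K (k-1)` of singletons or strictly convex compact sets in independent
subspaces, factor subgroups `G i` act properly discontinuously and cocompactly on the
factors and trivially on the other factors, a virtual center `Z ≅ ℤ^{k-1}` acts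
trivially on each factor, and a finite-index subgroup `Γ'` of `Γ` is isomorphic to
`Z × G 0 × ⋯ × G (k-1)`. -/
def IsAdmissibleA (act : GLn n → Vn n → Vn n) (Γ : Subgroup (GLn n)) (Sg : Set (Vn n)) : Prop :=
  ∃ (k : ℕ) (K : Fin k → Set (Vn n)) (G : Fin k → Subgroup (GLn n)) (Z Γ' : Subgroup (GLn n)),
    0 < k ∧
    closure Sg = strictJoinF K ∧
    (∀ (c : Fin k → ℝ) (p : Fin k → Vn n), (∀ i, p i ∈ K i) →
        (∑ i, c i • p i) = 0 → ∀ i, c i = 0) ∧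
    (∀ i, (∃ x, K i = {x}) ∨ (IsPCSub (K i) ∧ IsCompact (K i) ∧
        ∀ p q : Vn n, p ∈ relBd (K i) → q ∈ relBd (K i) → sphSeg p q ⊆ relBd (K i) → p = q)) ∧
    (∀ i, G i ≤ Γ) ∧
    (∀ i, ∀ g ∈ G i, act g '' K i = K i) ∧
    (∀ i, ProperlyDiscA act (G i) (relInt (K i)) ∧ CocompactA act (G i) (relInt (K i))) ∧
    (∀ i j, j ≠ i → ∀ g ∈ G i, ∀ x ∈ K j, act g x = x) ∧
    Z ≤ Γ ∧ (∀ g ∈ Z, ∀ i, ∀ x ∈ K i, act g x = x) ∧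
    Nonempty (↥Z ≃* Multiplicative (Fin (k - 1) → ℤ)) ∧
    Γ' ≤ Γ ∧ (Γ'.subgroupOf Γ).index ≠ 0 ∧
    Nonempty (↥Γ' ≃* ↥Z × ((i : Fin k) → ↥(G i)))

/-- virtual factorability: some finite-index subgroup has infinite center. -/
def VirtFactorable (Γ : Subgroup (GLn n)) : Prop :=
  ∃ Γ' : Subgroup (GLn n), Γ' ≤ Γ ∧ (Γ'.subgroupOf Γ).index ≠ 0 ∧
    ((Subgroup.center ↥Γ' : Subgroup ↥Γ') : Set ↥Γ').Infinite

/- ### supporting hyperplanes, smoothness and strict convexity -/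

/-- `f` is a supporting linear functional of `A` at `p`. -/
def SuppAt (A : Set (Vn n)) (f : Vn n →ₗ[ℝ] ℝ) (p : Vn n) : Prop :=
  f ≠ 0 ∧ f p = 0 ∧ ∀ x ∈ A, 0 ≤ f x

/-- `A` has a unique supporting hyperplane at `p` (i.e. `Bd A` is `C¹` at `p`). -/
def UniqueSuppAt (A : Set (Vn n)) (p : Vn n) : Prop :=
  (∃ f : Vn n →ₗ[ℝ] ℝ, SuppAt A f p) ∧
    ∀ f f' : Vn n →ₗ[ℝ] ℝ, SuppAt A f p → SuppAt A f' p → ∃ c : ℝ, 0 < c ∧ f' = c • f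

/-- `A` is strictly convex at `p`: no nondegenerate segment of `clo A` has `p` in its
interior. -/
def StrictlyConvexAt (A : Set (Vn n)) (p : Vn n) : Prop :=
  ∀ q r : Vn n, q ∈ closure A → r ∈ closure A → p ∈ sphSegOpen q r → q = r

/-- `A` is a smoothly embedded strictly convex open `d`-cell in the boundary of `L`
(smoothness is modeled by uniqueness of supporting hyperplanes). -/
def IsBoundaryCell (L A : Set (Vn n)) (d : ℕ) : Prop :=
  A.Nonempty ∧ A ⊆ BdS L ∧
  (∀ p ∈ A, UniqueSuppAt L p) ∧
  (∀ p ∈ A, StrictlyConvexAt L p) ∧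
  Nonempty (↥A ≃ₜ EuclideanSpace ℝ (Fin d))

/- ### lenses and lens-cones -/

/-- `L` is a lens with boundary components `A` and `B`. -/
def IsLens (L A B : Set (Vn n)) : Prop :=
  IsPCDom L ∧ BdS L = A ∪ B ∧ Disjoint A B ∧
  IsBoundaryCell L A (n - 1) ∧ IsBoundaryCell L B (n - 1)

/-- `v * L` is a lens-cone over the lens `L` with top `A` and bottom `B`. -/
def IsLensCone (v : Vn n) (L A B : Set (Vn n)) : Prop :=
  IsLens L A B ∧ v ∉ closure L ∧ IsPCSub (joinPt v L) ∧
  joinPt v L = joinPt v A ∧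
  ∀ x ∈ joinPt v L, x ≠ v → ∃! y : Vn n, y ∈ B ∧ y ∈ greatRay v x

/-- `v * L` is a generalized lens-cone over the generalized lens `L` with top `A` and
bottom `B`: the bottom is smooth and strictly convex, while the top is only required to
be the boundary of the cone (minus the vertex). -/
def IsGenLensCone (v : Vn n) (L A B : Set (Vn n)) : Prop :=
  IsPCDom L ∧ v ∉ closure L ∧ IsPCSub (joinPt v L) ∧
  BdS L = A ∪ B ∧ Disjoint A B ∧
  IsBoundaryCell L B (n - 1) ∧
  A = BdS (joinPt v L) ∩ BdS L ∧
  ∀ x ∈ joinPt v L, x ≠ v → ∃! y : Vn n, y ∈ B ∧ y ∈ greatRay v x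

/- ### pseudo-ends -/

/-- `N` is a (radial) p-end neighborhood of the p-end with vertex `v`. -/
def IsPEndNbhd (ΓE : Subgroup (GLn n)) (Om : Set (Vn n)) (v : Vn n) (N : Set (Vn n)) : Prop :=
  N ⊆ Om ∧ IsOpenInS N ∧ N.Nonempty ∧
  (∀ g ∈ ΓE, sphAct g '' N = N) ∧
  (∀ x ∈ N, sphSegOpen v x ⊆ N) ∧
  dirSet N v = dirSet Om v

/-- a properly convex radial pseudo-end (p-R-end) of `Om` with p-end vertex `v`,
p-end fundamental group `ΓE` and p-end neighborhood `N`. -/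
structure IsPREnd (Γ ΓE : Subgroup (GLn n)) (Om : Set (Vn n)) (v : Vn n) (N : Set (Vn n)) :
    Prop where
  v_sph : v ∈ Sph n
  v_bd : v ∈ BdS Om
  sub : ΓE ≤ Γ
  stab : ∀ g ∈ Γ, (sphAct g v = v ↔ g ∈ ΓE)
  nbhd : IsPEndNbhd ΓE Om v N
  dir_pc : IsPCSub (dirSet Om v)
  dir_open : IsOpenInLink v (dirSet Om v)
  dir_ne : (dirSet Om v).Nonempty
  dir_pd : ProperlyDiscA (lnkAct v) ΓE (dirSet Om v)
  dir_cc : CocompactA (lnkAct v) ΓE (dirSet Om v)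

/-- a totally geodesic pseudo-end (p-T-end) of `Om`, with ideal boundary `SE` contained in
the hyperplane `w^⊥`, p-end fundamental group `ΓE` and one-sided p-end neighborhood `U`. -/
structure IsPTEnd (Γ ΓE : Subgroup (GLn n)) (Om : Set (Vn n)) (w : Vn n) (SE U : Set (Vn n)) :
    Prop where
  w_sph : w ∈ Sph n
  SE_sub : SE ⊆ linkSph w
  SE_bd : SE ⊆ BdS Om
  SE_pc : IsPCSub SE
  SE_ne : SE.Nonempty
  SE_open : IsOpenInLink w SE
  sub : ΓE ≤ Γ
  inv : ∀ g ∈ ΓE, sphAct g '' SE = SE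
  pd : ProperlyDiscA sphAct ΓE SE
  cc : CocompactA sphAct ΓE SE
  comp : ∃ x : Vn n, U = connectedComponentIn (Om \ {y : Vn n | (inner ℝ y w : ℝ) = 0}) x
  cl : SE ⊆ closure U

/-- the p-R-end with vertex `v` is of generalized lens type. -/
def IsGenLensTypeR (ΓE : Subgroup (GLn n)) (Om : Set (Vn n)) (v : Vn n) : Prop :=
  ∃ L A B : Set (Vn n), IsGenLensCone v L A B ∧
    (∀ g ∈ ΓE, sphAct g '' L = L) ∧
    IsPEndNbhd ΓE Om v (IntS (joinPt v L) \ {v})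

/-- the p-R-end with vertex `v` is of lens type. -/
def IsLensTypeR (ΓE : Subgroup (GLn n)) (Om : Set (Vn n)) (v : Vn n) : Prop :=
  ∃ L A B : Set (Vn n), IsLensCone v L A B ∧
    (∀ g ∈ ΓE, sphAct g '' L = L) ∧
    IsPEndNbhd ΓE Om v (IntS (joinPt v L) \ {v})

/-- the p-T-end with ideal boundary `SE ⊆ w^⊥` is of lens type: `SE` has a `ΓE`-invariant
lens neighborhood `L` (in an ambient open set), with `L/ΓE` compact, `Bd L ∩ Om` smooth and
strictly convex, and the frontier of `Bd L ∩ Om` contained in the hyperplane. -/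
def IsLensTypeT (ΓE : Subgroup (GLn n)) (Om : Set (Vn n)) (w : Vn n) (SE : Set (Vn n)) : Prop :=
  ∃ L : Set (Vn n), IsPCDom L ∧ SE ⊆ L ∧
    (∀ g ∈ ΓE, sphAct g '' L = L) ∧
    CocompactA sphAct ΓE (closure L) ∧
    (∀ p ∈ BdS L ∩ Om, UniqueSuppAt L p ∧ StrictlyConvexAt L p) ∧
    closure (BdS L ∩ Om) \ (BdS L ∩ Om) ⊆ {y : Vn n | (inner ℝ y w : ℝ) = 0}

/-- `U` is a horoball p-end neighborhood of the p-R-end with vertex `v`. -/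
def IsHoroball (ΓE : Subgroup (GLn n)) (Om : Set (Vn n)) (v : Vn n) (U : Set (Vn n)) : Prop :=
  IsPCDom U ∧ U ⊆ Om ∧ (∀ g ∈ ΓE, sphAct g '' U = U) ∧
  (∀ p ∈ BdS U ∩ Om, UniqueSuppAt U p ∧ StrictlyConvexAt U p) ∧
  closure U ∩ BdS Om = {v}

/- ### strong irreducibility and tameness -/

/-- `g` preserves the linear subspace `W`. -/
def PreservesSubmodule (g : Mat n) (W : Submodule ℝ (Vn n)) : Prop := ∀ x ∈ W, mvec g x ∈ W

/-- `Γ` is strongly irreducible: no finite-index subgroup preserves a nonzero proper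
linear subspace. -/
def IsStronglyIrreducible (Γ : Subgroup (GLn n)) : Prop :=
  ∀ Γ' : Subgroup (GLn n), Γ' ≤ Γ → (Γ'.subgroupOf Γ).index ≠ 0 →
    ∀ W : Submodule ℝ (Vn n), W ≠ ⊥ → W ≠ ⊤ →
      ¬ ∀ g ∈ Γ', PreservesSubmodule ((g : Mat n)) W

/-- `Om/Γ` is strongly tame: there is a `Γ`-invariant closed cocompact core whose
complement is the disjoint union of the `Γ`-translates of finitely many p-end
neighborhoods. -/
def IsStronglyTame (Γ : Subgroup (GLn n)) (Om : Set (Vn n)) : Prop :=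
  ∃ (Om₀ : Set (Vn n)) (m : ℕ) (Nb : Fin m → Set (Vn n)),
    Om₀ ⊆ Om ∧ Om ∩ closure Om₀ ⊆ Om₀ ∧
    (∀ g ∈ Γ, sphAct g '' Om₀ = Om₀) ∧
    CocompactA sphAct Γ Om₀ ∧
    (∀ j, Nb j ⊆ Om \ Om₀) ∧
    (Om \ Om₀ = ⋃ j, ⋃ g ∈ Γ, sphAct g '' Nb j) ∧
    (∀ j j', ∀ g ∈ Γ, ∀ g' ∈ Γ,
      (sphAct g '' Nb j ∩ sphAct g' '' Nb j').Nonempty →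
        sphAct g '' Nb j = sphAct g' '' Nb j')

/- ### duality -/

/-- the dual domain of `A ⊆ S^n` inside the dual sphere (identified with `S^n` via the
inner product): the unit functionals strictly positive on `clo (cone A) ∖ {0}`. -/
def dualDom (A : Set (Vn n)) : Set (Vn n) :=
  {φ | φ ∈ Sph n ∧ ∀ x ∈ closure (rayCone A), x ≠ 0 → 0 < (inner ℝ φ x : ℝ)}

/-- the dual domain, inside the link sphere of `v`, of a set `A` of directions at `v`. -/
def dualLink (v : Vn n) (A : Set (Vn n)) : Set (Vn n) :=
  {φ | φ ∈ linkSph v ∧ ∀ x ∈ closure (rayCone A), x ≠ 0 → 0 < (inner ℝ φ x : ℝ)}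

/-- the dual (inverse transpose) of a group element, acting on the dual sphere. -/
def dualM (g : GLn n) : Mat n := (((g⁻¹ : GLn n) : Mat n))ᵀ

/- ### affine actions -/

/-- the affine chart `A^n` determined by the unit vector `w`. -/
def chartOf (w : Vn n) : Set (Vn n) := {x | x ∈ Sph n ∧ 0 < (inner ℝ x w : ℝ)}

/-- the (oriented) hyperplane with unit normal `φ` supports `U` at the point `x`. -/
def SuppHalf (U : Set (Vn n)) (φ x : Vn n) : Prop :=
  φ ∈ Sph n ∧ (inner ℝ φ x : ℝ) = 0 ∧ ∀ y ∈ U, 0 ≤ (inner ℝ φ y : ℝ)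

/-- the affine action of `Γ` (preserving the chart of `w`) is asymptotically nice with the
properly convex domain `U'` and the compact invariant family `J` of supporting
hyperplanes. -/
def AsympNiceWith (Γ : Subgroup (GLn n)) (w : Vn n) (Om U' J : Set (Vn n)) : Prop :=
  IsPCDom U' ∧ U' ⊆ chartOf w ∧ (∀ g ∈ Γ, sphAct g '' U' = U') ∧
  BdS U' ∩ linkSph w ⊆ closure Om ∧
  J.Nonempty ∧ IsCompact J ∧
  (∀ φ ∈ J, φ ≠ w ∧ φ ≠ -w ∧ ∃ x ∈ BdLink w Om, SuppHalf U' φ x) ∧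
  (∀ g ∈ Γ, pact (dualM g) '' J = J) ∧
  (∀ ψ : Vn n, ψ ∈ linkSph w → (∀ y ∈ Om, 0 ≤ (inner ℝ ψ y : ℝ)) →
    (∃ x ∈ closure Om, (inner ℝ ψ x : ℝ) = 0) →
      ∃ φ ∈ J, ∀ z : Vn n, (inner ℝ z w : ℝ) = 0 → (inner ℝ z ψ : ℝ) = 0 → (inner ℝ z φ : ℝ) = 0)

/-- asymptotically nice affine action. -/
def AsympNice (Γ : Subgroup (GLn n)) (w : Vn n) (Om : Set (Vn n)) : Prop :=
  ∃ U' J : Set (Vn n), AsympNiceWith Γ w Om U' J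

end CEnds

/-!
Because `Om` lies in the great sphere `w^⊥`, positivity of a functional on the cone over `Om`
ignores its `w`-component, so the tube over the dual of `Om` in the link of `w` is the dual
domain `dualDom Om` of `Om` in the whole sphere. The dual group preserves `dualDom Om` since `Γ`
preserves the cone over `Om`, and by continuity it preserves the closure, which is the tube.
The dual of `Om` in the link is nonempty by proper convexity of `Om`, open because positivity
only has to be tested on the compact set `closure Om`, and properly convex because `Om` is open:
a functional in its closure is nonnegative on `Om`, hence positive there.
-/

namespace CEnds

open RealInnerProductSpace

variable {n : ℕ}

section Normalization

lemma nrm_of_norm_eq_one {v : Vn n} (h : ‖v‖ = 1) : nrm v = v := by simp [nrm, h]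

lemma norm_nrm {v : Vn n} (h : v ≠ 0) : ‖nrm v‖ = 1 := by
  simp [nrm, norm_smul, h]

lemma nrm_smul_of_pos {c : ℝ} (hc : 0 < c) (v : Vn n) : nrm (c • v) = nrm v := by
  rcases eq_or_ne v 0 with rfl | hv
  · simp
  · simp [nrm, norm_smul, smul_smul, abs_of_pos hc, hc.ne']

lemma norm_smul_nrm (v : Vn n) : ‖v‖ • nrm v = v := by
  rcases eq_or_ne v 0 with rfl | hv
  · simp
  · simp [nrm, smul_smul, hv]

lemma inner_nrm_left (v x : Vn n) : ⟪nrm v, x⟫ = ‖v‖⁻¹ * ⟪v, x⟫ := real_inner_smul_left _ _ _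

lemma ne_zero_of_mem_sph {v : Vn n} (h : v ∈ Sph n) : v ≠ 0 := by
  rintro rfl
  simp [Sph] at h

lemma continuousAt_nrm {v : Vn n} (h : v ≠ 0) : ContinuousAt nrm v :=
  (continuous_norm.continuousAt.inv₀ (norm_ne_zero_iff.mpr h)).smul continuousAt_id

lemma closure_subset_sph {A : Set (Vn n)} (hA : A ⊆ Sph n) : closure A ⊆ Sph n :=
  closure_minimal hA (isClosed_eq continuous_norm continuous_const)

end Normalization

section MatrixAction

lemma mvec_eq_toEuclideanLin (M : Mat n) (x : Vn n) : mvec M x = Matrix.toEuclideanLin M x :=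
  rfl

lemma mvec_smul (M : Mat n) (c : ℝ) (x : Vn n) : mvec M (c • x) = c • mvec M x :=
  map_smul (Matrix.toEuclideanLin M) c x

lemma mvec_zero (M : Mat n) : mvec M 0 = 0 := map_zero (Matrix.toEuclideanLin M)

lemma continuous_mvec (M : Mat n) : Continuous (mvec M) :=
  (Matrix.toEuclideanLin M).continuous_of_finiteDimensional

lemma mvec_mvec (M N : Mat n) (x : Vn n) : mvec M (mvec N x) = mvec (M * N) x := by
  simp only [mvec_eq_toEuclideanLin, Matrix.toLpLin_mul_same, LinearMap.comp_apply]

lemma inner_mvec (M : Mat n) (x y : Vn n) : ⟪mvec M x, y⟫ = ⟪x, mvec Mᵀ y⟫ := by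
  have h := Matrix.toEuclideanLin_conjTranspose_eq_adjoint M
  rw [Matrix.conjTranspose_eq_transpose_of_trivial] at h
  rw [mvec_eq_toEuclideanLin, mvec_eq_toEuclideanLin, h, LinearMap.adjoint_inner_right]

lemma mvec_one (x : Vn n) : mvec 1 x = x := by
  rw [mvec_eq_toEuclideanLin, Matrix.toLpLin_one, LinearMap.id_apply]

lemma mvec_ne_zero_of_mul_eq_one {M N : Mat n} (h : N * M = 1) {x : Vn n} (hx : x ≠ 0) :
    mvec M x ≠ 0 := by
  intro hMx
  apply hx
  rw [← mvec_one x, ← h, ← mvec_mvec, hMx, mvec_zero]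

lemma pact_pact (M N : Mat n) (x : Vn n) : pact M (pact N x) = pact (M * N) x := by
  rcases eq_or_ne (mvec N x) 0 with h | h
  · simp [pact, nrm, h, mvec_zero, ← mvec_mvec]
  · show nrm (mvec M (‖mvec N x‖⁻¹ • mvec N x)) = nrm (mvec (M * N) x)
    rw [mvec_smul, nrm_smul_of_pos (inv_pos.2 (norm_pos_iff.2 h)), mvec_mvec]

lemma pact_pact_of_mul_eq_one {M N : Mat n} (h : M * N = 1) {x : Vn n} (hx : ‖x‖ = 1) :
    pact M (pact N x) = x := by
  rw [pact_pact, h, pact, mvec_one, nrm_of_norm_eq_one hx]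

lemma continuousAt_pact {M : Mat n} {x : Vn n} (hx : mvec M x ≠ 0) : ContinuousAt (pact M) x :=
  (continuousAt_nrm hx).comp (continuous_mvec M).continuousAt

lemma dualM_mul_dualM_inv (g : GLn n) : dualM g * dualM g⁻¹ = 1 := by
  rw [dualM, dualM, inv_inv, ← Matrix.transpose_mul, ← Units.val_mul, mul_inv_cancel,
    Units.val_one, Matrix.transpose_one]

lemma dualM_inv_mul_dualM (g : GLn n) : dualM g⁻¹ * dualM g = 1 := by
  simpa using dualM_mul_dualM_inv g⁻¹

lemma inner_mvec_dualM (g : GLn n) (φ x : Vn n) :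
    ⟪mvec (dualM g) φ, x⟫ = ⟪φ, mvec ((g⁻¹ : GLn n) : Mat n) x⟫ := by
  rw [dualM, inner_mvec, Matrix.transpose_transpose]

end MatrixAction

section DualCone

/-- `dualDom A` and `dualLink w A` are the intersections of this cone with `Sph n` and
`linkSph w`. -/
def dualCone (A : Set (Vn n)) : Set (Vn n) :=
  {φ | ∀ x ∈ closure (rayCone A), x ≠ 0 → 0 < ⟪φ, x⟫}

variable {A : Set (Vn n)}

lemma subset_rayCone : A ⊆ rayCone A := fun v hv => ⟨v, hv, 1, one_pos, (one_smul ℝ v).symm⟩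

lemma nrm_mem_of_mem_rayCone (hA : A ⊆ Sph n) {x : Vn n} (hx : x ∈ rayCone A) : nrm x ∈ A := by
  obtain ⟨v, hv, c, hc, rfl⟩ := hx
  rwa [nrm_smul_of_pos hc, nrm_of_norm_eq_one (hA hv)]

lemma smul_mem_dualCone_iff {c : ℝ} (hc : 0 < c) {φ : Vn n} :
    c • φ ∈ dualCone A ↔ φ ∈ dualCone A := by
  refine forall₂_congr fun x _ => ?_
  rw [real_inner_smul_left, mul_pos_iff_of_pos_left hc]

lemma convex_dualCone : Convex ℝ (dualCone A) := by
  refine convex_iff_forall_pos.2 fun φ hφ ψ hψ a b ha hb _ x hx hx0 => ?_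
  rw [inner_add_left, real_inner_smul_left, real_inner_smul_left]
  exact add_pos (mul_pos ha (hφ x hx hx0)) (mul_pos hb (hψ x hx hx0))

lemma zero_notMem_dualCone (hA : A ⊆ Sph n) (hne : A.Nonempty) : (0 : Vn n) ∉ dualCone A := by
  obtain ⟨u, hu⟩ := hne
  intro h
  simpa using h u (subset_closure (subset_rayCone hu)) (ne_zero_of_mem_sph (hA hu))

lemma mem_dualCone_iff (hA : A ⊆ Sph n) {φ : Vn n} :
    φ ∈ dualCone A ↔ ∀ u ∈ closure A, 0 < ⟪φ, u⟫ := by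
  refine ⟨fun h u hu => h u (closure_mono subset_rayCone hu)
    (ne_zero_of_mem_sph (closure_subset_sph hA hu)), fun h x hx hx0 => ?_⟩
  have hnx : nrm x ∈ closure A :=
    (continuousAt_nrm hx0).continuousWithinAt.mem_closure hx
      fun _ hy => nrm_mem_of_mem_rayCone hA hy
  rw [← norm_smul_nrm x, real_inner_smul_right]
  exact mul_pos (norm_pos_iff.2 hx0) (h _ hnx)

lemma isOpen_dualCone (hA : A ⊆ Sph n) : IsOpen (dualCone A) := by
  have hK : IsCompact (closure A) :=
    (isCompact_sphere (0 : Vn n) 1).of_isClosed_subset isClosed_closure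
      fun x hx => mem_sphere_zero_iff_norm.2 (closure_subset_sph hA hx)
  rw [isOpen_iff_mem_nhds]
  intro φ hφ
  filter_upwards [hK.eventually_forall_of_forall_eventually (P := fun ψ u => 0 < ⟪ψ, u⟫)
    fun u hu => (continuous_inner (𝕜 := ℝ) (E := Vn n)).continuousAt.eventually
      (lt_mem_nhds ((mem_dualCone_iff hA).1 hφ u hu))] with ψ hψ
  exact (mem_dualCone_iff hA).2 hψ

end DualCone

section DualAction

variable {A : Set (Vn n)} {g : GLn n}

lemma mvec_mem_rayCone (hg : sphAct g '' A ⊆ A) {x : Vn n} (hx : x ∈ rayCone A) :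
    mvec (g : Mat n) x ∈ rayCone A := by
  obtain ⟨v, hv, c, hc, rfl⟩ := hx
  rcases eq_or_ne v 0 with rfl | hv0
  · exact ⟨0, hv, c, hc, by rw [smul_zero, mvec_zero]⟩
  have hgv : mvec (g : Mat n) v ≠ 0 := mvec_ne_zero_of_mul_eq_one g.inv_mul hv0
  refine ⟨sphAct g v, hg (mem_image_of_mem _ hv), c * ‖mvec (g : Mat n) v‖,
    mul_pos hc (norm_pos_iff.2 hgv), ?_⟩
  rw [mvec_smul, mul_smul, sphAct, pact, norm_smul_nrm]

lemma mvec_mem_closure_rayCone (hg : sphAct g '' A ⊆ A) {x : Vn n}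
    (hx : x ∈ closure (rayCone A)) : mvec (g : Mat n) x ∈ closure (rayCone A) :=
  (MapsTo.closure (fun _ hy => mvec_mem_rayCone hg hy) (continuous_mvec _)) hx

lemma pact_dualM_mem_dualDom (hg : sphAct g⁻¹ '' A ⊆ A) {φ : Vn n} (hφ : φ ∈ dualDom A) :
    pact (dualM g) φ ∈ dualDom A := by
  obtain ⟨hφ1, hφA⟩ := hφ
  have hgφ : mvec (dualM g) φ ≠ 0 :=
    mvec_ne_zero_of_mul_eq_one (dualM_inv_mul_dualM g) (ne_zero_of_mem_sph hφ1)
  refine ⟨norm_nrm hgφ, fun x hx hx0 => ?_⟩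
  rw [pact, inner_nrm_left, inner_mvec_dualM]
  exact mul_pos (inv_pos.2 (norm_pos_iff.2 hgφ))
    (hφA _ (mvec_mem_closure_rayCone hg hx) (mvec_ne_zero_of_mul_eq_one g.mul_inv hx0))

lemma image_closure_eq_of_leftInvOn {X : Type*} [TopologicalSpace X] {f f' : X → X} {s : Set X}
    (hf : ContinuousOn f (closure s)) (hf' : ContinuousOn f' (closure s)) (hfs : MapsTo f s s)
    (hf's : MapsTo f' s s) (hinv : ∀ x ∈ closure s, f (f' x) = x) : f '' closure s = closure s :=
  (hfs.closure_of_continuousOn hf).image_subset.antisymm fun x hx =>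
    ⟨f' x, hf's.closure_of_continuousOn hf' hx, hinv x hx⟩

lemma pact_dualM_image_closure_dualDom (hg : sphAct g '' A ⊆ A) (hg' : sphAct g⁻¹ '' A ⊆ A) :
    pact (dualM g) '' closure (dualDom A) = closure (dualDom A) := by
  have hsph : closure (dualDom A) ⊆ Sph n := closure_subset_sph fun φ hφ => hφ.1
  have hcont : ∀ h : GLn n, ContinuousOn (pact (dualM h)) (closure (dualDom A)) := fun h φ hφ =>
    (continuousAt_pact (mvec_ne_zero_of_mul_eq_one (dualM_inv_mul_dualM h)
      (ne_zero_of_mem_sph (hsph hφ)))).continuousWithinAt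
  refine image_closure_eq_of_leftInvOn (hcont g) (hcont g⁻¹)
    (fun φ hφ => pact_dualM_mem_dualDom hg' hφ) (fun φ hφ => pact_dualM_mem_dualDom ?_ hφ)
    fun φ hφ => pact_pact_of_mul_eq_one (dualM_mul_dualM_inv g) (hsph hφ)
  rwa [inv_inv]

end DualAction

section Tube

variable {w : Vn n}

lemma perp_add_inner_smul (x : Vn n) : perp w x + ⟪x, w⟫ • w = x := sub_add_cancel _ _

lemma inner_perp_self (hw : ‖w‖ = 1) (x : Vn n) : ⟪perp w x, w⟫ = 0 := by
  rw [perp, inner_sub_left, real_inner_smul_left, real_inner_self_eq_norm_sq, hw]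
  ring

lemma inner_perp_of_inner_eq_zero {u : Vn n} (hu : ⟪w, u⟫ = 0) (x : Vn n) :
    ⟪perp w x, u⟫ = ⟪x, u⟫ := by
  rw [perp, inner_sub_left, real_inner_smul_left, hu, mul_zero, sub_zero]

lemma norm_sq_eq_norm_perp_sq_add (hw : ‖w‖ = 1) (x : Vn n) :
    ‖x‖ ^ 2 = ‖perp w x‖ ^ 2 + ⟪x, w⟫ ^ 2 := by
  conv_lhs => rw [← perp_add_inner_smul (w := w) x]
  rw [norm_add_sq_real, real_inner_smul_right, inner_perp_self hw, norm_smul, hw,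
    Real.norm_eq_abs, mul_one, sq_abs]
  ring

/-- The angle of `x` from `w` is `arccos ⟪x, w⟫` and its direction is `nrm (perp w x)`. -/
lemma mem_tubeCore_iff (hw : ‖w‖ = 1) {Sg : Set (Vn n)} (hSg : Sg ⊆ linkSph w) {x : Vn n} :
    x ∈ tubeCore w Sg ↔ ‖x‖ = 1 ∧ perp w x ≠ 0 ∧ nrm (perp w x) ∈ Sg := by
  constructor
  · rintro ⟨u, hu, t, ht0, htπ, rfl⟩
    obtain ⟨hu1, huw⟩ := hSg hu
    have hsin : 0 < Real.sin t := Real.sin_pos_of_pos_of_lt_pi ht0 htπ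
    have hxw : ⟪Real.cos t • w + Real.sin t • u, w⟫ = Real.cos t := by
      rw [inner_add_left, real_inner_smul_left, real_inner_smul_left, real_inner_self_eq_norm_sq,
        hw, huw]
      ring
    have hperp : perp w (Real.cos t • w + Real.sin t • u) = Real.sin t • u := by
      rw [perp, hxw, add_sub_cancel_left]
    refine ⟨?_, ?_, ?_⟩
    · rw [← pow_eq_one_iff_of_nonneg (norm_nonneg _) two_ne_zero,
        norm_sq_eq_norm_perp_sq_add hw, hperp, hxw, norm_smul, hu1, Real.norm_eq_abs, mul_one,
        sq_abs, Real.sin_sq_add_cos_sq]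
    · rw [hperp]
      exact smul_ne_zero hsin.ne' (ne_zero_of_mem_sph hu1)
    · rwa [hperp, nrm_smul_of_pos hsin, nrm_of_norm_eq_one hu1]
  · rintro ⟨hx1, hp0, hpS⟩
    have hsq : ‖perp w x‖ ^ 2 = 1 - ⟪x, w⟫ ^ 2 := by
      have h := norm_sq_eq_norm_perp_sq_add hw x
      rw [hx1, one_pow] at h
      linarith
    have habs : |⟪x, w⟫| < 1 := by
      rw [← sq_lt_one_iff_abs_lt_one]
      linarith [pow_pos (norm_pos_iff.2 hp0) 2]
    obtain ⟨hlo, hhi⟩ := abs_lt.1 habs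
    refine ⟨nrm (perp w x), hpS, Real.arccos ⟪x, w⟫, Real.arccos_pos.2 hhi,
      Real.arccos_lt_pi.2 hlo, ?_⟩
    rw [Real.cos_arccos hlo.le hhi.le, Real.sin_arccos, ← hsq, Real.sqrt_sq (norm_nonneg _),
      norm_smul_nrm, add_comm, perp_add_inner_smul]

lemma dirSet_tubeCore (hw : ‖w‖ = 1) {Sg : Set (Vn n)} (hSg : Sg ⊆ linkSph w) :
    dirSet (tubeCore w Sg) w = Sg := by
  have hww : ⟪w, w⟫ = 1 := by rw [real_inner_self_eq_norm_sq, hw, one_pow]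
  ext u
  constructor
  · rintro ⟨hul, t, ht0, htπ, hseg⟩
    obtain ⟨u', hu', t', ht'0, ht'π, heq⟩ := hseg (t / 2) (half_pos ht0) (half_lt_self ht0)
    have hcos : Real.cos (t / 2) = Real.cos t' := by
      have h := congrArg (fun x : Vn n => ⟪x, w⟫) heq
      simp only [inner_add_left, real_inner_smul_left, hww, hul.2, (hSg hu').2] at h
      linarith
    have ht' : t / 2 = t' :=
      Real.injOn_cos ⟨(half_pos ht0).le, by linarith⟩ ⟨ht'0.le, ht'π.le⟩ hcos
    rw [← ht'] at heq
    have hsin : Real.sin (t / 2) ≠ 0 :=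
      (Real.sin_pos_of_pos_of_lt_pi (half_pos ht0) (by linarith)).ne'
    rwa [smul_right_injective (Vn n) hsin (add_left_cancel heq)]
  · intro hu
    exact ⟨hSg hu, Real.pi / 2, half_pos Real.pi_pos, half_lt_self Real.pi_pos,
      fun s hs0 hs2 => ⟨u, hu, s, hs0, hs2.trans (half_lt_self Real.pi_pos), rfl⟩⟩

end Tube

section DualLink

variable {w : Vn n} {A : Set (Vn n)}

lemma linkSph_subset_sph : linkSph w ⊆ Sph n := fun _ hu => hu.1

lemma inner_eq_zero_of_mem_closure_rayCone (hA : A ⊆ linkSph w) {y : Vn n}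
    (hy : y ∈ closure (rayCone A)) : ⟪w, y⟫ = 0 := by
  refine closure_minimal ?_ (isClosed_eq (continuous_const.inner continuous_id) continuous_const) hy
  rintro _ ⟨v, hv, c, -, rfl⟩
  show ⟪w, c • v⟫ = 0
  rw [real_inner_smul_right, real_inner_comm, (hA hv).2, mul_zero]

lemma perp_mem_dualCone_iff (hA : A ⊆ linkSph w) {x : Vn n} :
    perp w x ∈ dualCone A ↔ x ∈ dualCone A := by
  refine forall₂_congr fun y hy => ?_
  rw [inner_perp_of_inner_eq_zero (inner_eq_zero_of_mem_closure_rayCone hA hy)]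

lemma nrm_mem_dualLink {z : Vn n} (hzw : ⟪z, w⟫ = 0) (hz : z ∈ dualCone A)
    (hz0 : z ≠ 0) : nrm z ∈ dualLink w A :=
  ⟨⟨norm_nrm hz0, by rw [inner_nrm_left, hzw, mul_zero]⟩,
    (smul_mem_dualCone_iff (inv_pos.2 (norm_pos_iff.2 hz0))).2 hz⟩

lemma tubeCore_dualLink (hw : ‖w‖ = 1) (hA : A ⊆ linkSph w) (hne : A.Nonempty) :
    tubeCore w (dualLink w A) = dualDom A := by
  ext x
  rw [mem_tubeCore_iff hw fun _ hφ => hφ.1]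
  constructor
  · rintro ⟨hx1, hp0, -, hpA⟩
    exact ⟨hx1, (perp_mem_dualCone_iff hA).1
      ((smul_mem_dualCone_iff (inv_pos.2 (norm_pos_iff.2 hp0))).1 hpA)⟩
  · rintro ⟨hx1, hxA⟩
    have hpA := (perp_mem_dualCone_iff hA).2 hxA
    have hp0 : perp w x ≠ 0 :=
      ne_of_mem_of_not_mem hpA (zero_notMem_dualCone (hA.trans linkSph_subset_sph) hne)
    exact ⟨hx1, hp0, nrm_mem_dualLink (inner_perp_self hw x) hpA hp0⟩

lemma dualLink_nonempty (hw : ‖w‖ = 1) (hA : A ⊆ linkSph w) (hpc : IsPCSub A)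
    (hne : A.Nonempty) : (dualLink w A).Nonempty := by
  obtain ⟨-, -, f, hf⟩ := hpc
  set y := (InnerProductSpace.toDual ℝ (Vn n)).symm (LinearMap.toContinuousLinearMap f)
  have hy : ∀ x, ⟪y, x⟫ = f x := fun x => by simp [y]
  have hpA : perp w y ∈ dualCone A := by
    rw [perp_mem_dualCone_iff hA, mem_dualCone_iff (hA.trans linkSph_subset_sph)]
    exact fun u hu => (hy u).symm ▸ hf u hu
  have hp0 : perp w y ≠ 0 :=
    ne_of_mem_of_not_mem hpA (zero_notMem_dualCone (hA.trans linkSph_subset_sph) hne)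
  exact ⟨_, nrm_mem_dualLink (inner_perp_self hw y) hpA hp0⟩

lemma isOpenInLink_dualLink (hA : A ⊆ linkSph w) : IsOpenInLink w (dualLink w A) :=
  ⟨dualCone A, isOpen_dualCone (hA.trans linkSph_subset_sph), inter_comm _ _⟩


lemma convex_insert_zero {E : Type*} [AddCommGroup E] [Module ℝ E] {C : Set E}
    (hC : Convex ℝ C) (hsmul : ∀ c : ℝ, 0 < c → ∀ x ∈ C, c • x ∈ C) : Convex ℝ (insert 0 C) := by
  refine convex_iff_forall_pos.2 fun x hx y hy a b ha hb hab => ?_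
  rcases hx with rfl | hx <;> rcases hy with rfl | hy
  · simp
  · exact Or.inr (by simpa using hsmul b hb y hy)
  · exact Or.inr (by simpa using hsmul a ha x hx)
  · exact Or.inr (hC hx hy ha.le hb.le hab)

lemma insert_zero_rayCone {C : Set (Vn n)} (hsmul : ∀ c : ℝ, 0 < c → ∀ x ∈ C, c • x ∈ C) :
    insert 0 (rayCone {u | ‖u‖ = 1 ∧ u ∈ C}) = insert 0 C := by
  refine subset_antisymm (insert_subset_insert ?_) (insert_subset_iff.2 ⟨mem_insert _ _, ?_⟩)
  · rintro _ ⟨u, hu, c, hc, rfl⟩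
    exact hsmul c hc u hu.2
  · intro z hz
    rcases eq_or_ne z 0 with rfl | hz0
    · exact mem_insert _ _
    · exact Or.inr ⟨nrm z, ⟨norm_nrm hz0, hsmul _ (inv_pos.2 (norm_pos_iff.2 hz0)) z hz⟩, ‖z‖,
        norm_pos_iff.2 hz0, (norm_smul_nrm z).symm⟩

lemma convex_insert_zero_rayCone_dualLink :
    Convex ℝ (insert 0 (rayCone (dualLink w A))) := by
  have hsmul : ∀ c : ℝ, 0 < c → ∀ z ∈ {z : Vn n | ⟪z, w⟫ = 0} ∩ dualCone A,
      c • z ∈ {z : Vn n | ⟪z, w⟫ = 0} ∩ dualCone A := fun c hc z hz =>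
    ⟨show ⟪c • z, w⟫ = 0 by rw [real_inner_smul_left, hz.1, mul_zero],
      (smul_mem_dualCone_iff hc).2 hz.2⟩
  have hdual : dualLink w A = {u | ‖u‖ = 1 ∧ u ∈ {z : Vn n | ⟪z, w⟫ = 0} ∩ dualCone A} :=
    ext fun _ => and_assoc
  rw [hdual, insert_zero_rayCone hsmul]
  have hlin : IsLinearMap ℝ fun z : Vn n => ⟪z, w⟫ :=
    ⟨fun x y => inner_add_left x y w, fun c x => real_inner_smul_left x w c⟩
  exact convex_insert_zero ((convex_hyperplane hlin 0).inter convex_dualCone) hsmul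

lemma exists_pos_nrm_add_smul_mem (hA : A ⊆ linkSph w) (hAo : IsOpenInLink w A) {u : Vn n}
    (hu : u ∈ A) {q : Vn n} (hqw : ⟪q, w⟫ = 0) : ∃ t : ℝ, 0 < t ∧ nrm (u + t • q) ∈ A := by
  obtain ⟨U, hU, rfl⟩ := hAo
  have hcont : ContinuousAt (fun t : ℝ => nrm (u + t • q)) 0 := by
    refine ContinuousAt.comp (g := nrm) ?_ (by fun_prop)
    simpa using continuousAt_nrm (ne_zero_of_mem_sph (hA hu).1)
  have hmem : nrm (u + (0 : ℝ) • q) ∈ U ∩ {0}ᶜ := by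
    rw [zero_smul, add_zero, nrm_of_norm_eq_one (hA hu).1]
    exact ⟨hu.1, ne_zero_of_mem_sph (hA hu).1⟩
  obtain ⟨t, ⟨htU, htne⟩, ht⟩ := ((hcont.eventually ((hU.inter isOpen_compl_singleton).mem_nhds
    hmem)).filter_mono nhdsWithin_le_nhds |>.and (self_mem_nhdsWithin (s := Ioi 0))).exists
  have hz0 : u + t • q ≠ 0 := fun h => htne (by rw [h]; simp [nrm])
  refine ⟨t, ht, htU, norm_nrm hz0, ?_⟩
  rw [inner_nrm_left, inner_add_left, real_inner_smul_left, (hA hu).2, hqw]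
  ring

/-- Moving from `u` slightly in the direction `-φ` stays inside `A`, where `φ` is nonnegative. -/
lemma inner_pos_of_forall_inner_nonneg (hA : A ⊆ linkSph w) (hAo : IsOpenInLink w A)
    {u : Vn n} (hu : u ∈ A) {φ : Vn n} (hφw : ⟪φ, w⟫ = 0) (hφ0 : φ ≠ 0)
    (hφ : ∀ v ∈ A, 0 ≤ ⟪φ, v⟫) : 0 < ⟪φ, u⟫ := by
  obtain ⟨t, ht, htA⟩ :=
    exists_pos_nrm_add_smul_mem hA hAo hu (q := -φ) (by rw [inner_neg_left, hφw, neg_zero])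
  have hz0 : u + t • -φ ≠ 0 := fun h => ne_zero_of_mem_sph (hA htA).1 (by rw [h]; simp [nrm])
  have h := hφ _ htA
  rw [real_inner_comm, inner_nrm_left, inner_add_left, real_inner_smul_left, inner_neg_left,
    real_inner_self_eq_norm_sq, real_inner_comm] at h
  have hle := nonneg_of_mul_nonneg_right h (inv_pos.2 (norm_pos_iff.2 hz0))
  nlinarith [pow_pos (norm_pos_iff.2 hφ0) 2]

lemma closure_dualLink_subset (hA : A ⊆ linkSph w) :
    closure (dualLink w A) ⊆ linkSph w ∩ ⋂ v ∈ A, {φ | 0 ≤ ⟪φ, v⟫} := by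
  refine closure_minimal (fun φ hφ => ⟨hφ.1, mem_iInter₂.2 fun v hv => ?_⟩) ?_
  · exact (hφ.2 v (subset_closure (subset_rayCone hv)) (ne_zero_of_mem_sph (hA hv).1)).le
  · exact ((isClosed_eq continuous_norm continuous_const).inter
      (isClosed_eq (continuous_id.inner continuous_const) continuous_const)).inter
      (isClosed_biInter fun v _ =>
        isClosed_le continuous_const (continuous_id.inner continuous_const))

lemma isPCSub_dualLink (hA : A ⊆ linkSph w) (hAo : IsOpenInLink w A) (hne : A.Nonempty) :
    IsPCSub (dualLink w A) := by
  obtain ⟨u, hu⟩ := hne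
  refine ⟨fun φ hφ => hφ.1.1, convex_insert_zero_rayCone_dualLink, innerₛₗ ℝ u, fun φ hφ => ?_⟩
  obtain ⟨⟨hφ1, hφw⟩, hφA⟩ := closure_dualLink_subset hA hφ
  rw [innerₛₗ_apply_apply, real_inner_comm]
  exact inner_pos_of_forall_inner_nonneg hA hAo hu hφw (ne_zero_of_mem_sph hφ1) (mem_iInter₂.1 hφA)

lemma pact_dualM_image_tube (hw : ‖w‖ = 1) (hA : A ⊆ linkSph w) (hne : A.Nonempty) {g : GLn n}
    (hg : sphAct g '' A ⊆ A) (hg' : sphAct g⁻¹ '' A ⊆ A) :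
    pact (dualM g) '' tube w (dualLink w A) = tube w (dualLink w A) := by
  rw [tube, tubeCore_dualLink hw hA hne]
  exact pact_dualM_image_closure_dualDom hg hg'

end DualLink

theorem dual_action_tubular_general
    (n : ℕ) (w : Vn n) (hw : w ∈ Sph n)
    (Γ : Subgroup (GLn n)) (Om : Set (Vn n))
    (hOsub : Om ⊆ linkSph w) (hOpc : IsPCSub Om)
    (hOopen : IsOpenInLink w Om) (hOne : Om.Nonempty)
    (hinv : ∀ g ∈ Γ, sphAct g '' Om = Om) :
    (∀ g ∈ Γ, pact (dualM g) '' tube w (dualLink w Om) = tube w (dualLink w Om)) ∧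
    IsPCSub (dualLink w Om) ∧ IsOpenInLink w (dualLink w Om) ∧ (dualLink w Om).Nonempty ∧
    dirSet (tubeCore w (dualLink w Om)) w = dualLink w Om :=
  ⟨fun g hg => pact_dualM_image_tube hw hOsub hOne (hinv g hg).subset
      (hinv g⁻¹ (inv_mem hg)).subset,
    isPCSub_dualLink hOsub hOopen hOne, isOpenInLink_dualLink hOsub,
    dualLink_nonempty hw hOsub hOpc hOne, dirSet_tubeCore hw fun _ hφ => hφ.1⟩

/-- Proposition 3.6: the dual of a cocompact action on a properly convex
domain `Om` in the hyperplane at infinity is a properly tubular action on the tube over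
the dual domain, whose space of directions at the vertex is the dual domain of `Om`. -/
theorem dual_action_tubular
    (n : ℕ) (hn : 2 ≤ n) (w : Vn n) (hw : w ∈ Sph n)
    (Γ : Subgroup (GLn n)) (Om : Set (Vn n))
    (hSL : ∀ g ∈ Γ, g ∈ SLpm n)
    (hOsub : Om ⊆ linkSph w) (hOpc : IsPCSub Om)
    (hOopen : IsOpenInLink w Om) (hOne : Om.Nonempty)
    (hinv : ∀ g ∈ Γ, sphAct g '' Om = Om)
    (hcc : CocompactA sphAct Γ Om) :
    (∀ g ∈ Γ, pact (dualM g) '' tube w (dualLink w Om) = tube w (dualLink w Om)) ∧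
    IsPCSub (dualLink w Om) ∧ IsOpenInLink w (dualLink w Om) ∧ (dualLink w Om).Nonempty ∧
    dirSet (tubeCore w (dualLink w Om)) w = dualLink w Om :=
  dual_action_tubular_general n w hw Γ Om hOsub hOpc hOopen hOne hinv

end CEnds
end
end

section
/- Let n ≥ 2 and let λ₁ ≥ λ₂ ≥ ⋯ ≥ λ_n be positive real numbers with λ₁·λ₂·⋯·λ_n = 1, λ₁ > λ₂ and λ_{n−1} > λ_n. Set ℓ := log(λ₁/λ_n), β := ℓ / log(λ₁/λ₂) and α := ℓ / log(λ₁/λ_{n−1}). Then (1/n)·(1 + (n−2)/β)·ℓ ≤ log λ₁ ≤ (1/n)·(1 + (n−2)/α)·ℓ. -/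
/-!
Common definitions for formalizing "A classification of ends of properly convex
real projective orbifolds II" (Choi).

We model the projective sphere `S^n` as the unit sphere of `ℝ^{n+1}`
(the quotient of `ℝ^{n+1} ∖ {0}` by positive scalars), on which matrices of
`GL(n+1,ℝ)` act projectively after radial normalization.  Convexity of subsets
of `S^n` is expressed through convexity of the corresponding radial cones, and
the Hilbert metric is expressed through the standard cone-gauge formula.
Smoothness of strictly convex boundary hypersurfaces is modeled by uniqueness
of supporting hyperplanes (`C¹`) together with strict convexity, and
"open cell" by homeomorphism with a Euclidean space.
-/

open Matrix Set

noncomputable section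

/-!
With `f i = log (lam i)` antitone and summing to `0`, `n · f 0 = ∑ i, (f 0 - f i)`. The first and
last terms are `0` and `ℓ`, and each of the `n - 2` middle terms lies between `f 0 - f 1 = ℓ / β`
and `f 0 - f (n - 2) = ℓ / α`.
-/

theorem Fin.sum_univ_eq_first_add_sum_add_last {M : Type*} [AddCommMonoid M] {m : ℕ}
    (f : Fin (m + 2) → M) :
    ∑ i, f i = f 0 + ∑ j : Fin m, f j.castSucc.succ + f (Fin.last _) := by
  rw [Fin.sum_univ_succ, Fin.sum_univ_castSucc]
  exact (add_assoc _ _ _).symm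

section Antitone

variable {M : Type*} [AddCommMonoid M] [PartialOrder M] [IsOrderedAddMonoid M] {m : ℕ}
  {f : Fin (m + 2) → M}

theorem Antitone.sum_le_first_add_nsmul_add_last (hf : Antitone f) :
    ∑ i, f i ≤ f 0 + m • f 1 + f (Fin.last _) := by
  rw [Fin.sum_univ_eq_first_add_sum_add_last]
  gcongr
  simpa using Finset.sum_le_card_nsmul Finset.univ (fun j : Fin m => f j.castSucc.succ) (f 1)
    fun j _ => hf (Fin.le_iff_val_le_val.2 (by simp))

theorem Antitone.first_add_nsmul_add_last_le_sum (hf : Antitone f) :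
    f 0 + m • f (Fin.last m).castSucc + f (Fin.last _) ≤ ∑ i, f i := by
  rw [Fin.sum_univ_eq_first_add_sum_add_last]
  gcongr
  simpa using Finset.card_nsmul_le_sum Finset.univ (fun j : Fin m => f j.castSucc.succ)
    (f (Fin.last m).castSucc) fun j _ => hf (Fin.le_iff_val_le_val.2 (by simp))

end Antitone

theorem one_add_div_div_mul {K : Type*} [Field K] {ℓ : K} (hℓ : ℓ ≠ 0) (c D : K) :
    (1 + c / (ℓ / D)) * ℓ = ℓ + c * D := by
  rw [div_div_eq_mul_div]
  field_simp

namespace CEnds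

/-- Theorem 4.3: the eigenvalue estimate for a biproximal element. -/
theorem eigenvalue_estimate_biproximal
    (n : ℕ) (hn : 2 ≤ n) (lam : Fin n → ℝ)
    (hpos : ∀ i, 0 < lam i)
    (hmono : ∀ i j : Fin n, i ≤ j → lam j ≤ lam i)
    (hprod : ∏ i, lam i = 1)
    (htop : lam ⟨1, by omega⟩ < lam ⟨0, by omega⟩)
    (ℓ β α : ℝ)
    (hl : ℓ = Real.log (lam ⟨0, by omega⟩ / lam ⟨n - 1, by omega⟩))
    (hβ : β = ℓ / Real.log (lam ⟨0, by omega⟩ / lam ⟨1, by omega⟩))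
    (hα : α = ℓ / Real.log (lam ⟨0, by omega⟩ / lam ⟨n - 2, by omega⟩)) :
    (1 / (n : ℝ)) * (1 + ((n : ℝ) - 2) / β) * ℓ ≤ Real.log (lam ⟨0, by omega⟩) ∧
    Real.log (lam ⟨0, by omega⟩) ≤ (1 / (n : ℝ)) * (1 + ((n : ℝ) - 2) / α) * ℓ := by
  obtain ⟨m, rfl⟩ : ∃ m, n = m + 2 := ⟨n - 2, by omega⟩
  have hlast : (⟨m + 2 - 1, by omega⟩ : Fin (m + 2)) = Fin.last (m + 1) := Fin.ext (by simp)
  have hpenult : (⟨m + 2 - 2, by omega⟩ : Fin (m + 2)) = (Fin.last m).castSucc :=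
    Fin.ext (by simp)
  simp only [Fin.zero_eta, Fin.mk_one, hlast, hpenult] at htop hl hβ hα ⊢
  set f : Fin (m + 2) → ℝ := fun i => Real.log (lam i)
  have hf : Antitone f := fun i j hij => Real.log_le_log (hpos j) (hmono i j hij)
  have hsum : ∑ i, f i = 0 := by
    rw [← Real.log_prod fun i _ => (hpos i).ne', hprod, Real.log_one]
  have hlog_div (i j) : Real.log (lam i / lam j) = f i - f j :=
    Real.log_div (hpos i).ne' (hpos j).ne'
  rw [hlog_div] at hl hβ hα
  have hℓ : ℓ ≠ 0 := by
    have hgap := Real.log_lt_log (hpos _) htop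
    have hf1 := hf (Fin.le_last 1)
    linarith
  have hupper := hf.sum_le_first_add_nsmul_add_last
  have hlower := hf.first_add_nsmul_add_last_le_sum
  rw [hsum, nsmul_eq_mul] at hupper hlower
  rw [hβ, hα, mul_assoc, mul_assoc, one_add_div_div_mul hℓ, one_add_div_div_mul hℓ]
  push_cast
  constructor <;> rw [one_div_mul_eq_div]
  · rw [div_le_iff₀ (by positivity)]; linarith
  · rw [le_div_iff₀ (by positivity)]; linarith

end CEnds
end
end
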